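/- Let b_1, …, b_n be linearly independent vectors in ℤ[α]^n ⊂ ℝ^n, where each coordinate of each b_i is an element of ℤ[α] with opc at most C, and let B := max_{1≤i≤n} ‖b_i‖₂². Then every nonzero vector x of the lattice Λ = {c_1 b_1 + ⋯ + c_n b_n : c_i ∈ ℤ} satisfies ‖x‖₂² ≥ 1/(P_α·S_α·M_α^{(2n−1)(m−1)}·(n^n·n!)^{m−1}·B^{n−1}·C^{2n(m−1)}), where M_α := m(1+‖f‖_∞)^{m−1}, S_α := 1 + |α| + ⋯ + |α|^{m−1}, and P_α := m·‖f‖₂^{m−1}·(M_α + √m)^{m−1}. -/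

import Mathlib

open Polynomial Finset

/-- The Euclidean norm of the coefficient vector `(p_0, …, p_{d-1})` of a polynomial. -/
noncomputable def normTwo (d : ℕ) (p : Polynomial ℤ) : ℝ :=
  Real.sqrt (∑ i ∈ Finset.range d, ((p.coeff i : ℝ)) ^ 2)

/-- `‖f‖_∞` over the coefficients `f_0, …, f_{m-1}`. -/
def fninf (m : ℕ) (f : Polynomial ℤ) : ℤ :=
  ((Finset.univ.sup fun i : Fin m => (f.coeff (i : ℕ)).natAbs : ℕ) : ℤ)

/-- `M_α = m (1 + ‖f‖_∞)^{m-1}`. -/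
noncomputable def Malpha (m : ℕ) (f : Polynomial ℤ) : ℝ :=
  (m : ℝ) * (1 + (fninf m f : ℝ)) ^ (m - 1)

/-- `P_α = m ‖f‖₂^{m-1} (M_α + √m)^{m-1}`. -/
noncomputable def Palpha (m : ℕ) (f : Polynomial ℤ) : ℝ :=
  (m : ℝ) * normTwo (m + 1) f ^ (m - 1) * (Malpha m f + Real.sqrt m) ^ (m - 1)

/-- `S_α = 1 + |α| + ⋯ + |α|^{m-1}`. -/
noncomputable def Salpha (m : ℕ) (α : ℝ) : ℝ := ∑ k ∈ Finset.range m, |α| ^ k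

/-- The real number represented by the coefficient vector `v` of an element of `ℤ[α]`. -/
noncomputable def coordVal (m : ℕ) (α : ℝ) (v : Fin m → ℤ) : ℝ :=
  ∑ t, (v t : ℝ) * α ^ (t : ℕ)

open NumberField

/-!
Let `G` be the matrix with rows `b i` and `x = ∑ cᵢ bᵢ` a nonzero lattice vector. Replacing a row
`i₀` with `c i₀ ≠ 0` by `x` multiplies `det G` by `c i₀`, so Hadamard's inequality gives
`(det G)² ≤ ‖x‖² B^(n-1)`.

On the other hand the entries of `G` are the images under `θ ↦ α` of elements `∑ₜ bₜ θᵗ` of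
`ℤ[θ] ⊆ ℚ[X]/(f)`, so `det G` is a real conjugate of a nonzero algebraic integer `d`. The norm of
`d` is a nonzero integer, while by Cauchy's bound every conjugate of `θ` has modulus at most
`1 + ‖f‖_∞`, so every conjugate of `d` has modulus at most `n! (C M_α)ⁿ`. Hence
`1 ≤ |det G| (n! (C M_α)ⁿ)^(m-1)`; squaring and combining with the first estimate, using
`n!² ≤ nⁿ n!` and `M_α^(m-1) ≤ P_α S_α`, gives the bound.
-/

theorem Matrix.det_sq_le_prod_sum_sq {n : ℕ} (A : Matrix (Fin n) (Fin n) ℝ) :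
    A.det ^ 2 ≤ ∏ i, ∑ j, A i j ^ 2 := by
  have : Fact (Module.finrank ℝ (EuclideanSpace ℝ (Fin n)) = n) := ⟨finrank_euclideanSpace_fin⟩
  let e := EuclideanSpace.basisFun (Fin n) ℝ
  let v : Fin n → EuclideanSpace ℝ (Fin n) := fun i => WithLp.toLp 2 (A i)
  have hdet : |A.det| ≤ ∏ i, ‖v i‖ := by
    have h := e.toBasis.orientation.abs_volumeForm_apply_le v
    rw [Orientation.volumeForm_robust' _ e, Module.Basis.det_apply] at h
    convert h using 2
    rw [← Matrix.det_transpose]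
    congr 1
  calc A.det ^ 2 = |A.det| ^ 2 := (sq_abs _).symm
    _ ≤ (∏ i, ‖v i‖) ^ 2 := by gcongr
    _ = ∏ i, ∑ j, A i j ^ 2 := by simp [← prod_pow, v, EuclideanSpace.norm_sq_eq]

theorem Matrix.det_sq_le_sum_sq_mul_pow {n : ℕ} (G : Matrix (Fin n) (Fin n) ℝ) {B : ℝ}
    (hB : ∀ i, ∑ k, G i k ^ 2 ≤ B) {c : Fin n → ℤ} (hc : c ≠ 0) :
    G.det ^ 2 ≤ (∑ k, (∑ i, (c i : ℝ) • G i) k ^ 2) * B ^ (n - 1) := by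
  obtain ⟨i₀, hi₀⟩ := Function.ne_iff.mp hc
  set x := ∑ i, (c i : ℝ) • G i
  have hdet : (G.updateRow i₀ x).det = c i₀ * G.det := by
    rw [Matrix.det_updateRow_sum]
    simp
  have hc₀ : (1 : ℝ) ≤ (c i₀ : ℝ) ^ 2 := by
    rw [← sq_abs, ← Int.cast_abs]
    exact one_le_pow₀ (by exact_mod_cast Int.one_le_abs hi₀)
  calc G.det ^ 2 ≤ (c i₀ : ℝ) ^ 2 * G.det ^ 2 := le_mul_of_one_le_left (sq_nonneg _) hc₀
    _ = (G.updateRow i₀ x).det ^ 2 := by rw [hdet]; ring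
    _ ≤ ∏ i, ∑ k, G.updateRow i₀ x i k ^ 2 := Matrix.det_sq_le_prod_sum_sq _
    _ = (∑ k, x k ^ 2) * ∏ i ∈ univ.erase i₀, ∑ k, G i k ^ 2 := by
        rw [← mul_prod_erase _ _ (mem_univ i₀)]
        congr 1
        · simp
        · exact prod_congr rfl fun i hi => by simp [Matrix.updateRow_ne (ne_of_mem_erase hi)]
    _ ≤ (∑ k, x k ^ 2) * B ^ (n - 1) := by
        refine mul_le_mul_of_nonneg_left ?_ (sum_nonneg fun _ _ => sq_nonneg _)
        refine (prod_le_prod (fun _ _ => sum_nonneg fun _ _ => sq_nonneg _)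
          fun i _ => hB i).trans_eq ?_
        simp [card_erase_of_mem]

theorem NumberField.one_le_norm_mul_pow_of_ne_zero {K : Type*} [Field K] [NumberField K]
    {x : 𝓞 K} (hx : x ≠ 0) (σ : K →+* ℂ) {R : ℝ} (hR : ∀ τ : K →+* ℂ, ‖τ x‖ ≤ R) :
    1 ≤ ‖σ x‖ * R ^ (Module.finrank ℚ K - 1) := by
  have hnorm : (1 : ℝ) ≤ ‖Algebra.norm ℚ (x : K)‖ := by
    rw [← Algebra.coe_norm_int, Int.norm_cast_rat, Int.norm_eq_abs]
    exact_mod_cast Int.one_le_abs (Algebra.norm_ne_zero_iff.mpr hx)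
  have hhouse : house (x : K) ≤ R :=
    (pi_norm_le_iff_of_nonneg ((norm_nonneg _).trans (hR σ))).mpr hR
  calc (1 : ℝ) ≤ ‖Algebra.norm ℚ (x : K)‖ := hnorm
    _ ≤ ‖σ x‖ * house (x : K) ^ (Module.finrank ℚ K - 1) := norm_norm_le_norm_mul_house_pow _ σ
    _ ≤ ‖σ x‖ * R ^ (Module.finrank ℚ K - 1) := by gcongr; exact house_nonneg _

theorem abs_le_sup_natAbs {ι : Type*} [Fintype ι] (v : ι → ℤ) (t : ι) :
    |(v t : ℝ)| ≤ (((univ.sup fun t => (v t).natAbs : ℕ) : ℤ) : ℝ) := by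
  rw [← Int.cast_abs, Int.abs_eq_natAbs]
  exact_mod_cast le_sup (f := fun t => (v t).natAbs) (mem_univ t)

theorem fninf_nonneg (m : ℕ) (f : ℤ[X]) : 0 ≤ fninf m f := Int.natCast_nonneg _

theorem Polynomial.Monic.norm_le_one_add_fninf {m : ℕ} {f : ℤ[X]} (hmonic : f.Monic)
    (hdeg : f.natDegree = m) {z : ℂ} (hz : aeval z f = 0) : ‖z‖ ≤ 1 + fninf m f := by
  set g := f.map (Int.castRingHom ℂ)
  have hg : g.Monic := hmonic.map _
  have hroot : g.IsRoot z := by rwa [IsRoot, eval_map, ← algebraMap_int_eq, ← aeval_def]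
  set N : ℕ := univ.sup fun i : Fin m => (f.coeff i).natAbs
  have hcoeff : (range m).sup (fun i => ‖g.coeff i‖₊) ≤ N := Finset.sup_le fun i hi => by
    have h : ((f.coeff i).natAbs : ℝ) ≤ N := by
      exact_mod_cast le_sup (f := fun i : Fin m => (f.coeff i).natAbs)
        (mem_univ ⟨i, mem_range.mp hi⟩)
    rw [coeff_map, eq_intCast, ← NNReal.coe_le_coe, coe_nnnorm, Complex.norm_intCast]
    simpa [Nat.cast_natAbs] using h
  have hbound : cauchyBound g ≤ 1 + N := by
    rw [cauchyBound, hg.leadingCoeff, nnnorm_one, div_one, hmonic.natDegree_map, hdeg, add_comm]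
    gcongr
  have := (hroot.norm_lt_cauchyBound hg.ne_zero).le.trans hbound
  rw [← NNReal.coe_le_coe] at this
  rw [show (fninf m f : ℝ) = N from Int.cast_natCast N]
  simpa using this

section coordEval

variable {m : ℕ}

def coordEval {R : Type*} [Ring R] (θ : R) (v : Fin m → ℤ) : R :=
  ∑ t, (v t : R) * θ ^ (t : ℕ)

theorem map_coordEval {R S F : Type*} [Ring R] [Ring S] [FunLike F R S] [RingHomClass F R S]
    (φ : F) (θ : R) (v : Fin m → ℤ) : φ (coordEval θ v) = coordEval (φ θ) v := by
  simp [coordEval]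

theorem norm_coordEval_le {z : ℂ} {r C : ℝ} (hr : 1 ≤ r) (hz : ‖z‖ ≤ r) {v : Fin m → ℤ}
    (hv : ∀ t, |(v t : ℝ)| ≤ C) : ‖coordEval z v‖ ≤ C * (m * r ^ (m - 1)) := by
  calc ‖coordEval z v‖ ≤ ∑ t, ‖(v t : ℂ) * z ^ (t : ℕ)‖ := norm_sum_le _ _
    _ ≤ ∑ _t : Fin m, C * r ^ (m - 1) := by
        refine sum_le_sum fun t _ => ?_
        rw [norm_mul, norm_pow, Complex.norm_intCast]
        exact mul_le_mul (hv t) ((pow_le_pow_left₀ (norm_nonneg z) hz _).trans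
          (pow_le_pow_right₀ hr (Nat.le_sub_one_of_lt t.2))) (by positivity)
          ((abs_nonneg _).trans (hv t))
    _ = C * (m * r ^ (m - 1)) := by simp; ring

theorem RingHom.map_det_coordEval {R S : Type*} [CommRing R] [CommRing S] (φ : R →+* S)
    {n : ℕ} (θ : R) (b : Fin n → Fin n → Fin m → ℤ) :
    φ (Matrix.of fun i k => coordEval θ (b i k)).det =
      (Matrix.of fun i k => coordEval (φ θ) (b i k)).det := by
  rw [RingHom.map_det]
  congr 1
  ext i k
  exact map_coordEval φ θ (b i k)

end coordEval

theorem norm_det_coordEval_le {m n : ℕ} {f : ℤ[X]} (hmonic : f.Monic) (hdeg : f.natDegree = m)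
    {z : ℂ} (hz : aeval z f = 0) (b : Fin n → Fin n → Fin m → ℤ) {C : ℝ}
    (hC : ∀ i k t, |(b i k t : ℝ)| ≤ C) :
    ‖(Matrix.of fun i k => coordEval z (b i k)).det‖ ≤ n.factorial * (C * Malpha m f) ^ n := by
  have hr : (1 : ℝ) ≤ 1 + fninf m f := le_add_of_nonneg_right (by exact_mod_cast fninf_nonneg m f)
  have hentry (i k : Fin n) : ‖coordEval z (b i k)‖ ≤ C * Malpha m f :=
    norm_coordEval_le hr (hmonic.norm_le_one_add_fninf hdeg hz) (hC i k)
  exact (Matrix.det_le (abv := NormedField.toAbsoluteValue ℂ)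
    (A := Matrix.of fun i k => coordEval z (b i k)) hentry).trans_eq (by simp)

theorem one_le_abs_det_mul_pow {m : ℕ} {f : ℤ[X]} (hmonic : f.Monic) (hdeg : f.natDegree = m)
    (hirr : Irreducible (f.map (Int.castRingHom ℚ))) {α : ℝ} (hroot : aeval α f = 0)
    {n : ℕ} (b : Fin n → Fin n → Fin m → ℤ) {C : ℝ} (hC : ∀ i k t, |(b i k t : ℝ)| ≤ C)
    (hdet : (Matrix.of fun i k => coordVal m α (b i k)).det ≠ 0) :
    1 ≤ |(Matrix.of fun i k => coordVal m α (b i k)).det| *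
      (n.factorial * (C * Malpha m f) ^ n) ^ (m - 1) := by
  set fq := f.map (algebraMap ℤ ℚ)
  have : Fact (Irreducible fq) := ⟨hirr⟩
  set K := AdjoinRoot fq
  have hθ : aeval (AdjoinRoot.root fq) f = 0 := by
    rw [← aeval_map_algebraMap ℚ, aeval_def]
    exact AdjoinRoot.eval₂_root fq
  let θ : 𝓞 K := ⟨AdjoinRoot.root fq, f, hmonic, by rwa [← aeval_def]⟩
  set d := (Matrix.of fun i k => coordEval θ (b i k)).det
  have hα : aeval α fq = 0 := by rwa [aeval_map_algebraMap]
  let ρ : K →+* ℝ := AdjoinRoot.liftAlgHom fq (Algebra.ofId ℚ ℝ) α hα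
  have hρ : ρ d = (Matrix.of fun i k => coordVal m α (b i k)).det := by
    rw [← RingHom.comp_apply, RingHom.map_det_coordEval]
    exact congrArg (fun x => (Matrix.of fun i k => coordEval x (b i k)).det)
      (AdjoinRoot.liftAlgHom_root _ _ α hα)
  have hd : d ≠ 0 := fun h => hdet (by simp [← hρ, h])
  have hbound (τ : K →+* ℂ) : ‖τ d‖ ≤ n.factorial * (C * Malpha m f) ^ n := by
    rw [← RingHom.comp_apply, RingHom.map_det_coordEval]
    refine norm_det_coordEval_le hmonic hdeg ?_ b hC
    rw [RingHom.comp_apply, ← τ.toIntAlgHom_apply, aeval_algHom_apply]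
    exact (congrArg τ.toIntAlgHom hθ).trans (map_zero _)
  have := NumberField.one_le_norm_mul_pow_of_ne_zero hd (Complex.ofRealHom.comp ρ) hbound
  rwa [RingHom.comp_apply, Complex.ofRealHom_eq_coe, Complex.norm_real, Real.norm_eq_abs, hρ,
    (AdjoinRoot.powerBasis (Fact.out : Irreducible fq).ne_zero).finrank, AdjoinRoot.powerBasis_dim,
    hmonic.natDegree_map, hdeg] at this

theorem Malpha_nonneg (m : ℕ) (f : ℤ[X]) : 0 ≤ Malpha m f := by
  unfold Malpha fninf
  positivity

theorem one_le_normTwo {m : ℕ} {f : ℤ[X]} (hmonic : f.Monic) (hdeg : f.natDegree = m) :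
    1 ≤ normTwo (m + 1) f := by
  rw [normTwo, Real.one_le_sqrt]
  refine le_trans ?_
    (single_le_sum (fun i _ => sq_nonneg ((f.coeff i : ℝ))) (self_mem_range_succ m))
  simp [← hdeg, hmonic.coeff_natDegree]

theorem one_le_Salpha {m : ℕ} (hm : 1 ≤ m) (α : ℝ) : 1 ≤ Salpha m α := by
  refine le_trans ?_ (single_le_sum (fun k _ => pow_nonneg (abs_nonneg α) k) (mem_range.mpr hm))
  simp

theorem Malpha_pow_le_Palpha {m : ℕ} (hm : 1 ≤ m) {f : ℤ[X]} (hmonic : f.Monic)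
    (hdeg : f.natDegree = m) : Malpha m f ^ (m - 1) ≤ Palpha m f := by
  have hM := Malpha_nonneg m f
  calc Malpha m f ^ (m - 1) = 1 * 1 * Malpha m f ^ (m - 1) := by ring
    _ ≤ m * normTwo (m + 1) f ^ (m - 1) * (Malpha m f + √m) ^ (m - 1) := by
        gcongr
        · unfold normTwo; positivity
        · exact_mod_cast hm
        · exact one_le_pow₀ (one_le_normTwo hmonic hdeg)
        · exact le_add_of_nonneg_right (Real.sqrt_nonneg _)

theorem pow_mul_factorial_mul_pow_pow_le {m n : ℕ} (hm : 1 ≤ m) (hn : 1 ≤ n) {f : ℤ[X]}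
    (hmonic : f.Monic) (hdeg : f.natDegree = m) (α : ℝ) {B C : ℝ} (hB : 0 ≤ B) (hC : 0 ≤ C) :
    B ^ (n - 1) * (n.factorial * (C * Malpha m f) ^ n) ^ (2 * (m - 1)) ≤
      Palpha m f * Salpha m α * Malpha m f ^ ((2 * n - 1) * (m - 1)) *
        ((n : ℝ) ^ n * n.factorial) ^ (m - 1) * B ^ (n - 1) * C ^ (2 * n * (m - 1)) := by
  set M := Malpha m f
  have hM : 0 ≤ M := Malpha_nonneg m f
  have hfac : (n.factorial : ℝ) ^ 2 ≤ (n : ℝ) ^ n * n.factorial := by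
    rw [sq]; gcongr; exact_mod_cast Nat.factorial_le_pow n
  have hMP := Malpha_pow_le_Palpha hm hmonic hdeg
  have hMPS : M ^ (m - 1) ≤ Palpha m f * Salpha m α :=
    hMP.trans (le_mul_of_one_le_right ((pow_nonneg hM _).trans hMP) (one_le_Salpha hm α))
  obtain ⟨k, rfl⟩ : ∃ k, n = k + 1 := ⟨n - 1, by omega⟩
  calc B ^ (k + 1 - 1) * ((k + 1).factorial * (C * M) ^ (k + 1)) ^ (2 * (m - 1))
      = M ^ (m - 1) * M ^ ((2 * (k + 1) - 1) * (m - 1)) * (((k + 1).factorial : ℝ) ^ 2) ^ (m - 1) *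
          B ^ (k + 1 - 1) * C ^ (2 * (k + 1) * (m - 1)) := by
        rw [show 2 * (k + 1) - 1 = 2 * k + 1 by omega]
        ring
    _ ≤ _ := by
        gcongr
        exact mul_nonneg ((pow_nonneg hM _).trans hMPS) (pow_nonneg hM _)

theorem stmt_17_general (m : ℕ) (f : Polynomial ℤ)
    (hmonic : f.Monic) (hdeg : f.natDegree = m)
    (hirr : Irreducible (f.map (Int.castRingHom ℚ)))
    (α : ℝ) (hroot : Polynomial.aeval α f = 0)
    (n : ℕ) (b : Fin n → Fin n → (Fin m → ℤ))
    (hind : LinearIndependent ℝ (fun i => fun k => coordVal m α (b i k)))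
    (C : ℤ)
    (hC : ∀ i k, ((Finset.univ.sup fun t => (b i k t).natAbs : ℕ) : ℤ) ≤ C)
    (B : ℝ) (hB : ∀ i, ∑ k, coordVal m α (b i k) ^ 2 ≤ B) :
    ∀ c : Fin n → ℤ, (∑ i, (c i : ℝ) • fun k => coordVal m α (b i k)) ≠ 0 →
      (∑ k, (∑ i, (c i : ℝ) • fun k' => coordVal m α (b i k')) k ^ 2) ≥
        1 / (Palpha m f * Salpha m α *
          Malpha m f ^ ((2 * n - 1) * (m - 1)) *
          ((n : ℝ) ^ n * (n.factorial : ℝ)) ^ (m - 1) *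
          B ^ (n - 1) * (C : ℝ) ^ (2 * n * (m - 1))) := by
  intro c hx
  have hc : c ≠ 0 := by rintro rfl; simp at hx
  have hn : 1 ≤ n := Nat.pos_of_ne_zero (by rintro rfl; simp at hx)
  have hm : 1 ≤ m := hdeg ▸ hmonic.natDegree_map (Int.castRingHom ℚ) ▸ hirr.natDegree_pos
  set G : Matrix (Fin n) (Fin n) ℝ := Matrix.of fun i k => coordVal m α (b i k)
  have hdet : G.det ≠ 0 := ((Matrix.isUnit_iff_isUnit_det G).mp
    (Matrix.linearIndependent_rows_iff_isUnit.mp hind)).ne_zero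
  have hCb : ∀ i k t, |(b i k t : ℝ)| ≤ C := fun i k t =>
    (abs_le_sup_natAbs (b i k) t).trans (by exact_mod_cast hC i k)
  have hC0 : (0 : ℝ) ≤ C := (abs_nonneg _).trans (hCb ⟨0, hn⟩ ⟨0, hn⟩ ⟨0, hm⟩)
  have hB0 : 0 ≤ B := (sum_nonneg fun _ _ => sq_nonneg _).trans (hB ⟨0, hn⟩)
  set R := (n.factorial : ℝ) * (C * Malpha m f) ^ n
  set X := ∑ k, (∑ i, (c i : ℝ) • fun k' => coordVal m α (b i k')) k ^ 2
  have hX : 0 ≤ X := sum_nonneg fun _ _ => sq_nonneg _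
  have key : 1 ≤ X * (B ^ (n - 1) * R ^ (2 * (m - 1))) :=
    calc 1 ≤ (|G.det| * R ^ (m - 1)) ^ 2 :=
          one_le_pow₀ (one_le_abs_det_mul_pow hmonic hdeg hirr hroot b hCb hdet)
      _ = G.det ^ 2 * R ^ (2 * (m - 1)) := by rw [mul_pow, sq_abs, ← pow_mul, mul_comm (m - 1)]
      _ ≤ X * B ^ (n - 1) * R ^ (2 * (m - 1)) :=
          mul_le_mul_of_nonneg_right (G.det_sq_le_sum_sq_mul_pow hB hc)
            ((even_two_mul _).pow_nonneg R)
      _ = X * (B ^ (n - 1) * R ^ (2 * (m - 1))) := by ring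
  have hD := key.trans (mul_le_mul_of_nonneg_left
    (pow_mul_factorial_mul_pow_pow_le hm hn hmonic hdeg α hB0 hC0) hX)
  rw [ge_iff_le, div_le_iff₀ (pos_of_mul_pos_right (by linarith) hX)]
  linarith

theorem stmt_17 (m : ℕ) (hm : 1 ≤ m) (f : Polynomial ℤ)
    (hmonic : f.Monic) (hdeg : f.natDegree = m)
    (hirr : Irreducible (f.map (Int.castRingHom ℚ)))
    (α : ℝ) (hroot : Polynomial.aeval α f = 0)
    (n : ℕ) (b : Fin n → Fin n → (Fin m → ℤ))
    (hind : LinearIndependent ℝ (fun i => fun k => coordVal m α (b i k)))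
    (C : ℤ)
    (hC : ∀ i k, ((Finset.univ.sup fun t => (b i k t).natAbs : ℕ) : ℤ) ≤ C)
    (B : ℝ) (hB : ∀ i, ∑ k, coordVal m α (b i k) ^ 2 ≤ B) :
    ∀ c : Fin n → ℤ, (∑ i, (c i : ℝ) • fun k => coordVal m α (b i k)) ≠ 0 →
      (∑ k, (∑ i, (c i : ℝ) • fun k' => coordVal m α (b i k')) k ^ 2) ≥
        1 / (Palpha m f * Salpha m α *
          Malpha m f ^ ((2 * n - 1) * (m - 1)) *
          ((n : ℝ) ^ n * (n.factorial : ℝ)) ^ (m - 1) *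
          B ^ (n - 1) * (C : ℝ) ^ (2 * n * (m - 1))) :=
  stmt_17_general m f hmonic hdeg hirr α hroot n b hind C hC B hB
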